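/- Let (Ω, μ) be a probability space, β ≥ 1 a real number, and let p, r : Ω → ℝ be measurable functions with 0 < p(ω) ≤ 1 and r(ω) ≥ 1 for all ω. Assume the functions ω ↦ log(p(ω)), ω ↦ min(r(ω), β) · log(1/p(ω)), and ω ↦ log(min(r(ω), β)) are integrable with respect to μ. Then ∫ −log(p) dμ ≤ ∫ min(r, β) · log(1/p) dμ − ∫ log(min(r, β)) dμ + log(β). -/
import Mathlib


open MeasureTheory

theorem sratio_lemma1_ratio_ge_one
    {Ω : Type*} [MeasurableSpace Ω] (μ : Measure Ω) [IsProbabilityMeasure μ]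
    (β : ℝ) (hβ : 1 ≤ β)
    (p r : Ω → ℝ) (hp : Measurable p) (hr : Measurable r)
    (hp0 : ∀ ω, 0 < p ω) (hp1 : ∀ ω, p ω ≤ 1)
    (hr1 : ∀ ω, 1 ≤ r ω)
    (hint1 : Integrable (fun ω => Real.log (p ω)) μ)
    (hint2 : Integrable (fun ω => min (r ω) β * Real.log (1 / p ω)) μ)
    (hint3 : Integrable (fun ω => Real.log (min (r ω) β)) μ) :
    ∫ ω, -Real.log (p ω) ∂μ ≤
      (∫ ω, min (r ω) β * Real.log (1 / p ω) ∂μ)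
        - (∫ ω, Real.log (min (r ω) β) ∂μ) + Real.log β := by
  have key : ∀ ω, -Real.log (p ω) ≤
      min (r ω) β * Real.log (1 / p ω) - Real.log (min (r ω) β) + Real.log β := by
    intro ω
    have hm1 : (1:ℝ) ≤ min (r ω) β := le_min (hr1 ω) hβ
    have hmβ : min (r ω) β ≤ β := min_le_right _ _
    have hlog : Real.log (min (r ω) β) ≤ Real.log β :=
      Real.log_le_log (by linarith) hmβ
    have hlp : 0 ≤ Real.log (1 / p ω) := by
      rw [Real.log_div one_ne_zero (ne_of_gt (hp0 ω)), Real.log_one]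
      simp [Real.log_nonpos (le_of_lt (hp0 ω)) (hp1 ω)]
    have h1 : Real.log (1 / p ω) ≤ min (r ω) β * Real.log (1 / p ω) :=
      le_mul_of_one_le_left hlp hm1
    have h2 : -Real.log (p ω) = Real.log (1 / p ω) := by
      rw [Real.log_div one_ne_zero (ne_of_gt (hp0 ω)), Real.log_one]; ring
    linarith
  have hintL : Integrable (fun ω => -Real.log (p ω)) μ := hint1.neg
  have hintR : Integrable
      (fun ω => min (r ω) β * Real.log (1 / p ω) - Real.log (min (r ω) β) + Real.log β) μ :=
    (hint2.sub hint3).add (integrable_const _)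
  calc ∫ ω, -Real.log (p ω) ∂μ
      ≤ ∫ ω, (min (r ω) β * Real.log (1 / p ω) - Real.log (min (r ω) β) + Real.log β) ∂μ :=
        integral_mono hintL hintR key
    _ = (∫ ω, min (r ω) β * Real.log (1 / p ω) ∂μ)
        - (∫ ω, Real.log (min (r ω) β) ∂μ) + Real.log β := by
        rw [integral_add (f := fun ω => min (r ω) β * Real.log (1 / p ω)
            - Real.log (min (r ω) β)) (hint2.sub hint3) (integrable_const _),
          integral_const, integral_sub hint2 hint3]
        simp
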